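/- arXiv:1904.01799 — 7 statements merged into one kernel-verified Lean document; each statement's English description precedes it below -/
import Mathlib

section
/- Let $A_1 \in \mathbb{R}^{m \times n}$ and $A_2 \in \mathbb{R}^{q \times n}$ be linear operators satisfying $\mathrm{null}(A_1) \cap \mathrm{null}(A_2) = \{0\}$, and let $f_1 : \mathbb{R}^m \to \mathbb{R}$ and $f_2 : \mathbb{R}^q \to \mathbb{R}$ be continuous and coercive functions. Then the function $h : \mathbb{R}^n \to \mathbb{R}$ defined by $h(x) = f_1(A_1 x) + f_2(A_2 x)$ is continuous and coercive, i.e. $h(x) \to +\infty$ as $\|x\| \to +\infty$. -/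
open Filter Metric Topology

/-- If `A₁ ∈ ℝ^{m×n}`, `A₂ ∈ ℝ^{q×n}` have trivial common null space, and
`f₁ : ℝ^m → ℝ`, `f₂ : ℝ^q → ℝ` are continuous and coercive, then
`h(x) = f₁(A₁x) + f₂(A₂x)` is continuous and coercive
(`h(x) → +∞` as `‖x‖₂ → +∞`). -/
theorem stmt0 {m n q : ℕ}
    (A1 : Matrix (Fin m) (Fin n) ℝ) (A2 : Matrix (Fin q) (Fin n) ℝ)
    (hnull : ∀ x : Fin n → ℝ, A1.mulVec x = 0 → A2.mulVec x = 0 → x = 0)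
    (f1 : EuclideanSpace ℝ (Fin m) → ℝ) (f2 : EuclideanSpace ℝ (Fin q) → ℝ)
    (hf1c : Continuous f1) (hf2c : Continuous f2)
    (hf1 : Filter.Tendsto f1 (Filter.comap (fun y => ‖y‖) Filter.atTop) Filter.atTop)
    (hf2 : Filter.Tendsto f2 (Filter.comap (fun y => ‖y‖) Filter.atTop) Filter.atTop) :
    Continuous (fun x : EuclideanSpace ℝ (Fin n) => f1 (WithLp.toLp 2 (A1.mulVec x)) + f2 (WithLp.toLp 2 (A2.mulVec x))) ∧
    Filter.Tendsto (fun x : EuclideanSpace ℝ (Fin n) => f1 (WithLp.toLp 2 (A1.mulVec x)) + f2 (WithLp.toLp 2 (A2.mulVec x)))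
      (Filter.comap (fun x => ‖x‖) Filter.atTop) Filter.atTop := by
  -- The combined linear map x ↦ (A1 x, A2 x)
  set T : EuclideanSpace ℝ (Fin n) →ₗ[ℝ]
      (EuclideanSpace ℝ (Fin m)) × (EuclideanSpace ℝ (Fin q)) :=
    { toFun := fun x => (WithLp.toLp 2 (A1.mulVec x), WithLp.toLp 2 (A2.mulVec x))
      map_add' := fun x y => by simp [Matrix.mulVec_add]
      map_smul' := fun c x => by simp [Matrix.mulVec_smul] } with hT
  have hTinj : Function.Injective T := by
    rw [← LinearMap.ker_eq_bot, LinearMap.ker_eq_bot']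
    intro x hx
    rw [hT] at hx
    simp only [LinearMap.coe_mk, AddHom.coe_mk, Prod.mk_eq_zero] at hx
    exact congrArg (WithLp.toLp 2) (hnull x (congrArg WithLp.ofLp hx.1) (congrArg WithLp.ofLp hx.2))
  have hTcont : Continuous T := T.continuous_of_finiteDimensional
  have hcont : Continuous
      (fun x : EuclideanSpace ℝ (Fin n) => f1 (WithLp.toLp 2 (A1.mulVec x)) + f2 (WithLp.toLp 2 (A2.mulVec x))) := by
    have h1 : Continuous (fun x : EuclideanSpace ℝ (Fin n) =>
        (WithLp.toLp 2 (A1.mulVec x) : EuclideanSpace ℝ (Fin m))) := (continuous_fst.comp hTcont)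
    have h2 : Continuous (fun x : EuclideanSpace ℝ (Fin n) =>
        (WithLp.toLp 2 (A2.mulVec x) : EuclideanSpace ℝ (Fin q))) := (continuous_snd.comp hTcont)
    exact (hf1c.comp h1).add (hf2c.comp h2)
  refine ⟨hcont, ?_⟩
  -- rewrite filters as cocompact
  rw [comap_norm_atTop, Metric.cobounded_eq_cocompact] at hf1 hf2 ⊢
  -- f1, f2 are bounded below
  obtain ⟨y1, hy1⟩ := hf1c.exists_forall_le hf1
  obtain ⟨y2, hy2⟩ := hf2c.exists_forall_le hf2
  -- T is a proper map
  have hTproper : IsProperMap (T : EuclideanSpace ℝ (Fin n) →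
      (EuclideanSpace ℝ (Fin m)) × (EuclideanSpace ℝ (Fin q))) :=
    (T.isClosedEmbedding_of_injective (LinearMap.ker_eq_bot.mpr hTinj)).isProperMap
  have hTtendsto : Tendsto T (cocompact _) (cocompact _) := (isProperMap_iff_tendsto_cocompact.mp hTproper).2
  -- the sum function on the product is coercive
  have hsum : Tendsto (fun p : (EuclideanSpace ℝ (Fin m)) × (EuclideanSpace ℝ (Fin q)) =>
      f1 p.1 + f2 p.2) (cocompact _) atTop := by
    rw [← Filter.coprod_cocompact]
    rw [Filter.coprod]
    rw [tendsto_sup]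
    constructor
    · have h1 : Tendsto (fun p : (EuclideanSpace ℝ (Fin m)) × (EuclideanSpace ℝ (Fin q)) =>
          f1 p.1) (comap Prod.fst (cocompact _)) atTop := hf1.comp tendsto_comap
      refine tendsto_atTop_mono (fun p => ?_) (tendsto_atTop_add_const_right _ (f2 y2) h1)
      exact add_le_add le_rfl (hy2 p.2)
    · have h2 : Tendsto (fun p : (EuclideanSpace ℝ (Fin m)) × (EuclideanSpace ℝ (Fin q)) =>
          f2 p.2) (comap Prod.snd (cocompact _)) atTop := hf2.comp tendsto_comap
      refine tendsto_atTop_mono (fun p => ?_) (tendsto_atTop_add_const_left _ (f1 y1) h2)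
      exact add_le_add (hy1 p.1) le_rfl
  exact hsum.comp hTtendsto
end

section
/- Let $D \in \mathbb{R}^{2n \times n}$, $K \in \mathbb{R}^{n \times n}$ be matrices with $\mathrm{null}(D) \cap \mathrm{null}(K) = \{0\}$, let $L_1,\ldots,L_n \in \mathbb{R}^{2\times 2}$ be invertible matrices, let $p_i > 0$ for $i=1,\ldots,n$, let $\mu > 0$ and $g \in \mathbb{R}^n$. Then the DTV$_p^{\mathrm{sv}}$-L$_2$ functional $\mathcal{J} : \mathbb{R}^n \to \mathbb{R}$ defined by $\mathcal{J}(u) = \sum_{i=1}^{n} \|L_i \,((Du)_{2i-1}, (Du)_{2i})\|_2^{p_i} + \frac{\mu}{2}\|Ku - g\|_2^2$ is continuous, bounded from below by zero, and coercive; in particular it admits at least one global minimiser. -/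
/-- An injective linear map on a finite-dimensional real space is bounded below. -/
lemma antilip_aux {E F : Type*} [NormedAddCommGroup E] [NormedSpace ℝ E]
    [NormedAddCommGroup F] [NormedSpace ℝ F] [FiniteDimensional ℝ E]
    (f : E →ₗ[ℝ] F) (hf : Function.Injective f) :
    ∃ c : ℝ, 0 < c ∧ ∀ x, c * ‖x‖ ≤ ‖f x‖ := by
  obtain ⟨K, hK, hA⟩ := f.exists_antilipschitzWith (LinearMap.ker_eq_bot.2 hf)
  have hKpos : (0 : ℝ) < K := by exact_mod_cast hK
  refine ⟨(K : ℝ)⁻¹, by positivity, fun x => ?_⟩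
  have h := hA.le_mul_dist x 0
  simp only [map_zero, dist_zero_right] at h
  rw [inv_mul_le_iff₀ hKpos]
  exact h

/-- If a vector has sup norm at least `s > 0`, some coordinate has absolute value at least `s`. -/
lemma exists_coord {m : ℕ} (x : Fin m → ℝ) {s : ℝ} (hs : 0 < s) (h : s ≤ ‖x‖) :
    ∃ j, s ≤ |x j| := by
  rcases isEmpty_or_nonempty (Fin m) with hm | hm
  · exfalso
    have hx : x = 0 := Subsingleton.elim x 0
    rw [hx, norm_zero] at h
    linarith
  · obtain ⟨j, -, hj⟩ := Finset.exists_max_image Finset.univ (fun i => |x i|) ⟨hm.some, Finset.mem_univ _⟩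
    refine ⟨j, h.trans ?_⟩
    refine (pi_norm_le_iff_of_nonneg (abs_nonneg _)).2 fun i => ?_
    simpa [Real.norm_eq_abs] using hj i (Finset.mem_univ i)

set_option maxHeartbeats 1600000 in
/-- The DTVₚˢᵛ-L₂ functional
`J(u) = ∑ᵢ ‖Lᵢ ((Du)_{2i-1},(Du)_{2i})‖₂^{pᵢ} + μ/2 ‖Ku-g‖₂²`,
with `null(D) ∩ null(K) = {0}`, `Lᵢ` invertible, `pᵢ > 0` and `μ > 0`,
is continuous, bounded below by zero, coercive, and admits a global minimiser. -/
theorem stmt2 {n : ℕ}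
    (D : Matrix (Fin (2 * n)) (Fin n) ℝ) (K : Matrix (Fin n) (Fin n) ℝ)
    (hnull : ∀ u : Fin n → ℝ, D.mulVec u = 0 → K.mulVec u = 0 → u = 0)
    (L : Fin n → Matrix (Fin 2) (Fin 2) ℝ) (hL : ∀ i, IsUnit (L i))
    (p : Fin n → ℝ) (hp : ∀ i, 0 < p i) (μ : ℝ) (hμ : 0 < μ) (g : Fin n → ℝ) :
    let grad : EuclideanSpace ℝ (Fin n) → Fin n → Fin 2 → ℝ := fun u i =>
      ![D.mulVec u ⟨2 * i.1, by have := i.isLt; omega⟩,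
        D.mulVec u ⟨2 * i.1 + 1, by have := i.isLt; omega⟩]
    let J : EuclideanSpace ℝ (Fin n) → ℝ := fun u =>
      (∑ i : Fin n,
        Real.sqrt (((L i).mulVec (grad u i) 0) ^ 2 + ((L i).mulVec (grad u i) 1) ^ 2) ^ p i) +
      μ / 2 * ∑ j : Fin n, (K.mulVec u j - g j) ^ 2
    Continuous J ∧ (∀ u, 0 ≤ J u) ∧
      Filter.Tendsto J (Filter.comap (fun u => ‖u‖) Filter.atTop) Filter.atTop ∧
      ∃ ustar : EuclideanSpace ℝ (Fin n), ∀ u, J ustar ≤ J u := by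
  intro grad J
  classical
  have hJeq : ∀ u, J u = (∑ i : Fin n,
      Real.sqrt (((L i).mulVec (grad u i) 0) ^ 2 + ((L i).mulVec (grad u i) 1) ^ 2) ^ p i) +
      μ / 2 * ∑ j : Fin n, (K.mulVec u j - g j) ^ 2 := fun u => rfl
  -- the combined linear map u ↦ (Du, Ku)
  set T : EuclideanSpace ℝ (Fin n) →ₗ[ℝ] (Fin (2 * n) → ℝ) × (Fin n → ℝ) :=
    (D.mulVecLin.prod K.mulVecLin).comp
      (WithLp.linearEquiv 2 ℝ (Fin n → ℝ)).toLinearMap with hT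
  have hTapp : ∀ u, T u = (D.mulVec u, K.mulVec u) := fun u => rfl
  have hTc : Continuous T := T.continuous_of_finiteDimensional
  -- continuity of the linear pieces
  have hDc : Continuous fun u : EuclideanSpace ℝ (Fin n) => D.mulVec u :=
    continuous_fst.comp hTc
  have hKc : Continuous fun u : EuclideanSpace ℝ (Fin n) => K.mulVec u :=
    continuous_snd.comp hTc
  have hcoord : ∀ k, Continuous fun u : EuclideanSpace ℝ (Fin n) => D.mulVec u k :=
    fun k => (continuous_apply k).comp hDc
  have hmul : ∀ (i : Fin n) (j : Fin 2),
      Continuous fun u : EuclideanSpace ℝ (Fin n) => (L i).mulVec (grad u i) j := by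
    intro i j
    have heq : (fun u : EuclideanSpace ℝ (Fin n) => (L i).mulVec (grad u i) j)
        = fun u : EuclideanSpace ℝ (Fin n) => L i j 0 * D.mulVec u ⟨2 * i.1, by have := i.isLt; omega⟩
          + L i j 1 * D.mulVec u ⟨2 * i.1 + 1, by have := i.isLt; omega⟩ := by
      funext u
      simp [grad, Matrix.mulVec, dotProduct, Fin.sum_univ_two, Matrix.vecHead,
        Matrix.vecTail, Matrix.cons_val_zero, Matrix.cons_val_one]
    rw [heq]
    exact (continuous_const.mul (hcoord _)).add (continuous_const.mul (hcoord _))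
  have hJc : Continuous J := by
    apply Continuous.add
    · apply continuous_finset_sum
      intro i _
      apply Continuous.rpow_const
      · exact Real.continuous_sqrt.comp
          (((hmul i 0).pow 2).add ((hmul i 1).pow 2))
      · exact fun _ => Or.inr (hp i).le
    · apply Continuous.mul continuous_const
      apply continuous_finset_sum
      intro j _
      exact (((continuous_apply j).comp hKc).sub continuous_const).pow 2
  have hJ0 : ∀ u, 0 ≤ J u := by
    intro u
    apply add_nonneg
    · exact Finset.sum_nonneg fun i _ => Real.rpow_nonneg (Real.sqrt_nonneg _) _
    · apply mul_nonneg (by positivity)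
      exact Finset.sum_nonneg fun j _ => sq_nonneg _
  -- antilipschitz constant for (D, K)
  obtain ⟨c₀, hc₀, hc₀'⟩ := antilip_aux T
    (by
      rw [← LinearMap.ker_eq_bot, LinearMap.ker_eq_bot']
      intro u hu
      rw [hTapp, Prod.mk_eq_zero] at hu
      exact WithLp.ofLp_injective 2 (hnull _ hu.1 hu.2))
  -- antilipschitz constants for the Lᵢ
  have hLc : ∀ i, ∃ c : ℝ, 0 < c ∧ ∀ w : Fin 2 → ℝ, c * ‖w‖ ≤ ‖(L i).mulVec w‖ := by
    intro i
    obtain ⟨c, hc, hc'⟩ := antilip_aux (L i).mulVecLin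
      (by
        have := Matrix.mulVec_injective_iff_isUnit.2 (hL i)
        simpa [Function.Injective, Matrix.mulVecLin_apply] using this)
    exact ⟨c, hc, fun w => by simpa [Matrix.mulVecLin_apply] using hc' w⟩
  choose c hcpos hc using hLc
  have hcoer : Filter.Tendsto J (Filter.comap (fun u : EuclideanSpace ℝ (Fin n) => ‖u‖)
      Filter.atTop) Filter.atTop := by
    rw [Filter.tendsto_atTop]
    intro b
    set t : ℝ := Real.sqrt (2 * max b 0 / μ) with ht
    have ht0 : 0 ≤ t := Real.sqrt_nonneg _
    set sK : ℝ := ‖g‖ + t + 1 with hsK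
    set sD : Fin n → ℝ := fun i => (c i)⁻¹ * (max b 1) ^ (p i)⁻¹ with hsD
    have hsD0 : ∀ i, 0 ≤ sD i := fun i =>
      mul_nonneg (inv_nonneg.2 (hcpos i).le)
        (Real.rpow_nonneg (le_max_of_le_right zero_le_one) _)
    set s : ℝ := max sK (∑ i, sD i) with hs
    have hsK0 : 0 < sK := by
      have := norm_nonneg g
      rw [hsK]; linarith
    have hs0 : 0 < s := lt_of_lt_of_le hsK0 (le_max_left _ _)
    rw [Filter.eventually_comap]
    filter_upwards [Filter.eventually_ge_atTop (c₀⁻¹ * s)] with r hr u hu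
    -- ‖u‖ = r ≥ c₀⁻¹ s, so max(‖Du‖, ‖Ku‖) ≥ s
    have hmax : s ≤ max ‖D.mulVec u‖ ‖K.mulVec u‖ := by
      have h1 := hc₀' u
      have h2 : c₀ * (c₀⁻¹ * s) ≤ c₀ * ‖u‖ := by
        apply mul_le_mul_of_nonneg_left _ hc₀.le
        rw [hu]; exact hr
      rw [mul_inv_cancel_left₀ hc₀.ne'] at h2
      calc s ≤ c₀ * ‖u‖ := h2
        _ ≤ ‖T u‖ := h1
        _ = max ‖D.mulVec u‖ ‖K.mulVec u‖ := by rw [hTapp]; exact Prod.norm_def _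
    rcases max_cases ‖D.mulVec u‖ ‖K.mulVec u‖ with ⟨hm, _⟩ | ⟨hm, _⟩ <;> rw [hm] at hmax
    · -- D branch
      obtain ⟨k, hk⟩ := exists_coord (D.mulVec u) hs0 hmax
      set i : Fin n := ⟨k.1 / 2, by have := k.isLt; omega⟩ with hi
      -- some coordinate of grad u i equals D.mulVec u k
      have hgrad : ∃ j : Fin 2, grad u i j = D.mulVec u k := by
        rcases Nat.even_or_odd k.1 with ⟨m, hm2⟩ | ⟨m, hm2⟩
        · refine ⟨0, ?_⟩
          simp only [grad, Matrix.cons_val_zero]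
          congr 1
          ext
          simp [hi]; omega
        · refine ⟨1, ?_⟩
          simp only [grad, Matrix.cons_val_one, Matrix.head_cons, Matrix.cons_val_zero]
          congr 1
          ext
          simp [hi]; omega
      obtain ⟨j, hj⟩ := hgrad
      have hgs : s ≤ ‖grad u i‖ := by
        calc s ≤ |D.mulVec u k| := hk
          _ = ‖grad u i j‖ := by rw [hj, Real.norm_eq_abs]
          _ ≤ ‖grad u i‖ := norm_le_pi_norm _ j
      -- lower bound on the sqrt
      have hsqrt : c i * s ≤
          Real.sqrt (((L i).mulVec (grad u i) 0) ^ 2 + ((L i).mulVec (grad u i) 1) ^ 2) := by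
        have h1 : c i * s ≤ ‖(L i).mulVec (grad u i)‖ :=
          le_trans (mul_le_mul_of_nonneg_left hgs (hcpos i).le) (hc i _)
        refine h1.trans ?_
        refine (pi_norm_le_iff_of_nonneg (Real.sqrt_nonneg _)).2 fun j' => ?_
        have hnn : (0:ℝ) ≤ ((L i).mulVec (grad u i) 0) ^ 2 + ((L i).mulVec (grad u i) 1) ^ 2 := by
          positivity
        rw [Real.norm_eq_abs, ← Real.sqrt_sq_eq_abs]
        apply Real.sqrt_le_sqrt
        have h20 := sq_nonneg ((L i).mulVec (grad u i) 0)
        have h21 := sq_nonneg ((L i).mulVec (grad u i) 1)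
        fin_cases j' <;> simp only [Fin.zero_eta, Fin.mk_one, Fin.isValue] <;> linarith
      -- the i-th term is at least max b 1
      have hterm : max b 1 ≤
          Real.sqrt (((L i).mulVec (grad u i) 0) ^ 2 + ((L i).mulVec (grad u i) 1) ^ 2) ^ p i := by
        have h2 : (max b 1) ^ (p i)⁻¹ ≤ c i * s := by
          have h3 : sD i ≤ s :=
            le_trans (Finset.single_le_sum (fun i' _ => hsD0 i') (Finset.mem_univ i))
              (le_max_right _ _)
          have := mul_le_mul_of_nonneg_left h3 (hcpos i).le
          rwa [hsD, mul_inv_cancel_left₀ (hcpos i).ne'] at this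
        calc max b 1 = ((max b 1) ^ (p i)⁻¹) ^ p i :=
              (Real.rpow_inv_rpow (le_max_of_le_right zero_le_one) (hp i).ne').symm
          _ ≤ (c i * s) ^ p i :=
              Real.rpow_le_rpow (Real.rpow_nonneg (le_max_of_le_right zero_le_one) _) h2 (hp i).le
          _ ≤ _ := Real.rpow_le_rpow (mul_nonneg (hcpos i).le hs0.le) hsqrt (hp i).le
      calc b ≤ max b 1 := le_max_left _ _
        _ ≤ Real.sqrt (((L i).mulVec (grad u i) 0) ^ 2 + ((L i).mulVec (grad u i) 1) ^ 2) ^ p i :=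
            hterm
        _ ≤ ∑ i' : Fin n,
              Real.sqrt (((L i').mulVec (grad u i') 0) ^ 2 + ((L i').mulVec (grad u i') 1) ^ 2)
                ^ p i' :=
            Finset.single_le_sum (f := fun i' : Fin n =>
                Real.sqrt (((L i').mulVec (grad u i') 0) ^ 2 + ((L i').mulVec (grad u i') 1) ^ 2)
                  ^ p i')
              (fun i' _ => Real.rpow_nonneg (Real.sqrt_nonneg _) _) (Finset.mem_univ i)
        _ ≤ J u := by
            rw [hJeq u]
            refine le_add_of_nonneg_right (mul_nonneg (by positivity) ?_)
            exact Finset.sum_nonneg fun j' _ => sq_nonneg _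
    · -- K branch
      obtain ⟨j, hj⟩ := exists_coord (K.mulVec u) hs0 hmax
      have hgj : |g j| ≤ ‖g‖ := by
        rw [← Real.norm_eq_abs]; exact norm_le_pi_norm g j
      have habs : t ≤ |K.mulVec u j - g j| := by
        have h1 : sK ≤ |K.mulVec u j| := le_trans (le_max_left _ _) hj
        have h2 := abs_sub_abs_le_abs_sub (K.mulVec u j) (g j)
        simp only [hsK] at h1
        linarith
      have hsq : t ^ 2 ≤ (K.mulVec u j - g j) ^ 2 := by
        rw [← sq_abs (K.mulVec u j - g j)]
        exact pow_le_pow_left₀ ht0 habs 2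
      have ht2 : μ / 2 * t ^ 2 = max b 0 := by
        rw [ht, Real.sq_sqrt (by positivity)]
        field_simp
      have hsum : t ^ 2 ≤ ∑ j' : Fin n, (K.mulVec u j' - g j') ^ 2 :=
        le_trans hsq (Finset.single_le_sum (f := fun j' : Fin n => (K.mulVec u j' - g j') ^ 2)
          (fun j' _ => sq_nonneg _) (Finset.mem_univ j))
      calc b ≤ max b 0 := le_max_left _ _
        _ = μ / 2 * t ^ 2 := ht2.symm
        _ ≤ μ / 2 * ∑ j' : Fin n, (K.mulVec u j' - g j') ^ 2 :=
            mul_le_mul_of_nonneg_left hsum (by positivity)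
        _ ≤ J u := by
            rw [hJeq u]
            exact le_add_of_nonneg_left
              (Finset.sum_nonneg fun i' _ => Real.rpow_nonneg (Real.sqrt_nonneg _) _)
  refine ⟨hJc, hJ0, hcoer, ?_⟩
  apply hJc.exists_forall_le
  rwa [← Metric.cobounded_eq_cocompact, ← comap_norm_atTop]
end

section
/- Let $\kappa > 1$, $p > 0$, $\bar{\beta} > 0$, and $\bar{q} = (\bar{q}_1,\bar{q}_2) \in \mathbb{R}^2$ with $\bar{q}_1, \bar{q}_2 > 0$, and set $c_1 = -\frac{\bar{q}_1}{\kappa - 1}$, $c_2 = \frac{\kappa\, \bar{q}_2}{\kappa - 1}$. For $R > 0$, define $H_R(\theta) = R^p + \frac{\bar{\beta}}{2}\big( (\frac{R}{\sqrt{\kappa}}\cos\theta - \bar{q}_1)^2 + (R\sin\theta - \bar{q}_2)^2 \big)$ and the ellipse parametrisation $z_1(\theta;R) = \frac{R}{\sqrt{\kappa}}\cos\theta$, $z_2(\theta;R) = R\sin\theta$. Then for every $\theta$, the derivative of $H_R$ satisfies $H_R'(\theta) = \bar{\beta}\,\frac{\kappa - 1}{\sqrt{\kappa}}\,\big( (z_1(\theta;R)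 - c_1)(z_2(\theta;R) - c_2) - c_1 c_2 \big)$; in particular, $H_R'(\theta)$ is zero (respectively positive, negative) if and only if $(z_1(\theta;R) - c_1)(z_2(\theta;R) - c_2) - c_1 c_2$ is zero (respectively positive, negative). -/
/-! Along the ellipse, `z₁' = -z₂/√κ` and `z₂' = √κ z₁`, so the chain rule gives
`H_R' = (β̄/√κ) (κ z₁ (z₂ - q̄₂) - z₂ (z₁ - q̄₁))`. The bracket is the quadratic
`(κ - 1) z₁ z₂ + q̄₁ z₂ - κ q̄₂ z₁`, and completing the product puts it in the form
`(κ - 1) ((z₁ - c₁)(z₂ - c₂) - c₁ c₂)`, whose sign is that of the hyperbola expression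
because `β̄ (κ - 1)/√κ > 0`. -/

open Real

theorem hasDerivAt_sqDist_ellipse (a b q1 q2 θ : ℝ) :
    HasDerivAt (fun θ => (a * cos θ - q1) ^ 2 + (b * sin θ - q2) ^ 2)
      (2 * ((b * sin θ - q2) * (b * cos θ) - (a * cos θ - q1) * (a * sin θ))) θ := by
  have h1 := (((hasDerivAt_cos θ).const_mul a).sub_const q1).fun_pow 2
  have h2 := (((hasDerivAt_sin θ).const_mul b).sub_const q2).fun_pow 2
  refine (h1.add h2).congr_deriv ?_
  simp only [Nat.cast_ofNat, pow_one, Nat.add_one_sub_one]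
  ring

theorem tangent_dot_eq_hyperbola {s : ℝ} (hs : s ≠ 0) (hs1 : s ^ 2 - 1 ≠ 0) (q1 q2 z1 z2 : ℝ) :
    (z2 - q2) * (s * z1) - (z1 - q1) * (z2 / s) =
      (s ^ 2 - 1) / s * ((z1 - -q1 / (s ^ 2 - 1)) * (z2 - s ^ 2 * q2 / (s ^ 2 - 1)) -
        -q1 / (s ^ 2 - 1) * (s ^ 2 * q2 / (s ^ 2 - 1))) := by
  field_simp
  ring

theorem mul_sign_iff_of_pos {c : ℝ} (hc : 0 < c) (x : ℝ) :
    (c * x = 0 ↔ x = 0) ∧ (0 < c * x ↔ 0 < x) ∧ (c * x < 0 ↔ x < 0) :=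
  ⟨mul_eq_zero_iff_left hc.ne', mul_pos_iff_of_pos_left hc, by
    rw [← mul_zero c, mul_lt_mul_iff_right₀ hc, mul_zero]⟩

theorem stmt6_general (κ p β q1 q2 R : ℝ) (hκ : 1 < κ) (hβ : 0 < β) :
    let c1 : ℝ := -q1 / (κ - 1)
    let c2 : ℝ := κ * q2 / (κ - 1)
    let z1 : ℝ → ℝ := fun θ => R / Real.sqrt κ * Real.cos θ
    let z2 : ℝ → ℝ := fun θ => R * Real.sin θ
    let HR : ℝ → ℝ := fun θ =>
      R ^ p + β / 2 * ((z1 θ - q1) ^ 2 + (z2 θ - q2) ^ 2)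
    ∀ θ : ℝ,
      HasDerivAt HR
        (β * (κ - 1) / Real.sqrt κ * ((z1 θ - c1) * (z2 θ - c2) - c1 * c2)) θ ∧
      (deriv HR θ = 0 ↔ (z1 θ - c1) * (z2 θ - c2) - c1 * c2 = 0) ∧
      (0 < deriv HR θ ↔ 0 < (z1 θ - c1) * (z2 θ - c2) - c1 * c2) ∧
      (deriv HR θ < 0 ↔ (z1 θ - c1) * (z2 θ - c2) - c1 * c2 < 0) := by
  intro c1 c2 z1 z2 HR θ
  obtain ⟨s, hs, rfl⟩ : ∃ s, 0 < s ∧ s ^ 2 = κ :=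
    ⟨√κ, sqrt_pos.mpr (by linarith), sq_sqrt (by linarith)⟩
  have hs1 : 0 < s ^ 2 - 1 := by linarith
  have hd : HasDerivAt HR
      (β * (s ^ 2 - 1) / √(s ^ 2) * ((z1 θ - c1) * (z2 θ - c2) - c1 * c2)) θ := by
    refine (((hasDerivAt_sqDist_ellipse (R / √(s ^ 2)) R q1 q2 θ).const_mul (β / 2)).const_add
      (R ^ p)).congr_deriv ?_
    have hcos : R * cos θ = s * z1 θ := by simp only [z1, sqrt_sq hs.le]; field_simp
    have hsin : R / √(s ^ 2) * sin θ = z2 θ / s := by simp only [z2, sqrt_sq hs.le]; ring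
    rw [hcos, hsin, tangent_dot_eq_hyperbola hs.ne' hs1.ne', sqrt_sq hs.le]
    ring
  rw [hd.deriv]
  exact ⟨hd, mul_sign_iff_of_pos (by positivity) _⟩

/-- Derivative of the restriction `H_R` of the proximal objective to the ellipse
`E_R = {z : κz₁² + z₂² = R²}`: for all `θ`,
`H_R'(θ) = β̄ (κ-1)/√κ ((z₁(θ)-c₁)(z₂(θ)-c₂) - c₁c₂)`;
in particular `H_R'(θ)` is zero (resp. positive, negative) iff
`(z₁(θ)-c₁)(z₂(θ)-c₂) - c₁c₂` is zero (resp. positive, negative). -/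
theorem stmt6 (κ p β q1 q2 R : ℝ) (hκ : 1 < κ) (hp : 0 < p) (hβ : 0 < β)
    (hq1 : 0 < q1) (hq2 : 0 < q2) (hR : 0 < R) :
    let c1 : ℝ := -q1 / (κ - 1)
    let c2 : ℝ := κ * q2 / (κ - 1)
    let z1 : ℝ → ℝ := fun θ => R / Real.sqrt κ * Real.cos θ
    let z2 : ℝ → ℝ := fun θ => R * Real.sin θ
    let HR : ℝ → ℝ := fun θ =>
      R ^ p + β / 2 * ((z1 θ - q1) ^ 2 + (z2 θ - q2) ^ 2)
    ∀ θ : ℝ,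
      HasDerivAt HR
        (β * (κ - 1) / Real.sqrt κ * ((z1 θ - c1) * (z2 θ - c2) - c1 * c2)) θ ∧
      (deriv HR θ = 0 ↔ (z1 θ - c1) * (z2 θ - c2) - c1 * c2 = 0) ∧
      (0 < deriv HR θ ↔ 0 < (z1 θ - c1) * (z2 θ - c2) - c1 * c2) ∧
      (deriv HR θ < 0 ↔ (z1 θ - c1) * (z2 θ - c2) - c1 * c2 < 0) :=
  stmt6_general κ p β q1 q2 R hκ hβ
end

section
/- Let $\kappa > 1$, $p > 0$, $\bar{\beta} > 0$, $\bar{q} = (\bar{q}_1,\bar{q}_2) \in \mathbb{R}^2$ with $\bar{q}_1, \bar{q}_2 > 0$, and set $c_1 = -\frac{\bar{q}_1}{\kappa - 1}$, $c_2 = \frac{\kappa\, \bar{q}_2}{\kappa - 1}$. Fix $R > 0$ and consider the restriction $H_R(\theta) = R^p + \frac{\bar{\beta}}{2}\big( (\frac{R}{\sqrt{\kappa}}\cos\theta - \bar{q}_1)^2 + (R\sin\theta - \bar{q}_2)^2 \big)$ of the function $H(z) = (\kappa z_1^2 + z_2^2)^{p/2} + \frac{\bar{\beta}}{2}\|z -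 \bar{q}\|_2^2$ to the ellipse $\mathcal{E}_R = \{z : \kappa z_1^2 + z_2^2 = R^2\}$. Then every minimiser of $H_R$ over $[0, 2\pi)$ corresponds to a point of $\mathcal{E}_R \cap \mathcal{H}$, where $\mathcal{H} = \{z : (z_1 - c_1)(z_2 - c_2) = c_1 c_2\}$; moreover, the intersection point of $\mathcal{E}_R \cap \mathcal{H}$ lying in the first (open) quadrant is a global minimiser of $H_R$. -/
/-!
Up to the constant `R ^ p` and the factor `β / 2`, `H_R` is the squared distance `f θ` from `q̄` to
the point `(a cos θ, b sin θ)` of the ellipse, with `a = R / √κ < b = R`. Multiplied by `(κ - 1) a`,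
the equation of the hyperbola becomes `b / 2` times the derivative of this squared distance
(Apollonius' hyperbola), so minimisers lie on it. Conversely, at a critical point `θ`,
`cos θ · (f θ' - f θ) = a q₁ (cos θ' - cos θ)² + (cos θ (b² - a²) + a q₁) (sin θ' - sin θ)²`,
whose coefficients are nonnegative when `cos θ > 0`.
-/

open Real

noncomputable section

section EllipseDistSq

variable (a b q1 q2 : ℝ)

def ellipseDistSq (t : ℝ) : ℝ := (a * cos t - q1) ^ 2 + (b * sin t - q2) ^ 2

def ellipseDistSqDeriv (t : ℝ) : ℝ :=
  2 * ((b ^ 2 - a ^ 2) * sin t * cos t + a * q1 * sin t - b * q2 * cos t)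

theorem ellipseDistSq_periodic : Function.Periodic (ellipseDistSq a b q1 q2) (2 * π) := by
  intro t
  simp only [ellipseDistSq, cos_add_two_pi, sin_add_two_pi]

theorem hasDerivAt_ellipseDistSq (t : ℝ) :
    HasDerivAt (ellipseDistSq a b q1 q2) (ellipseDistSqDeriv a b q1 q2 t) t := by
  have h1 := ((hasDerivAt_cos t).const_mul a).sub_const q1
  have h2 := ((hasDerivAt_sin t).const_mul b).sub_const q2
  exact ((h1.pow 2).add (h2.pow 2)).congr_deriv (by simp only [ellipseDistSqDeriv]; ring)

variable {a b q1 q2}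

theorem ellipseDistSqDeriv_eq_zero_of_isLocalMin {t : ℝ}
    (h : IsLocalMin (ellipseDistSq a b q1 q2) t) : ellipseDistSqDeriv a b q1 q2 t = 0 :=
  h.hasDerivAt_eq_zero (hasDerivAt_ellipseDistSq a b q1 q2 t)

theorem ellipseDistSq_le_of_ellipseDistSqDeriv_eq_zero {t : ℝ} (ha : 0 ≤ a) (hq1 : 0 ≤ q1)
    (hab : a ^ 2 ≤ b ^ 2) (hcos : 0 < cos t) (hcrit : ellipseDistSqDeriv a b q1 q2 t = 0)
    (t' : ℝ) : ellipseDistSq a b q1 q2 t ≤ ellipseDistSq a b q1 q2 t' := by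
  have hkey : cos t * (ellipseDistSq a b q1 q2 t' - ellipseDistSq a b q1 q2 t) =
      a * q1 * (cos t' - cos t) ^ 2 + (cos t * (b ^ 2 - a ^ 2) + a * q1) * (sin t' - sin t) ^ 2 := by
    simp only [ellipseDistSq, ellipseDistSqDeriv] at hcrit ⊢
    linear_combination (sin t' - sin t) * hcrit + (cos t * a ^ 2 - a * q1) * sin_sq_add_cos_sq t'
      - (cos t * a ^ 2 - a * q1) * sin_sq_add_cos_sq t
  have hrhs : 0 ≤ a * q1 * (cos t' - cos t) ^ 2
      + (cos t * (b ^ 2 - a ^ 2) + a * q1) * (sin t' - sin t) ^ 2 := by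
    have : 0 ≤ b ^ 2 - a ^ 2 := sub_nonneg.mpr hab
    positivity
  rw [← hkey] at hrhs
  exact sub_nonneg.mp (nonneg_of_mul_nonneg_right hrhs hcos)

end EllipseDistSq

end

theorem hyperbola_iff_ellipseDistSqDeriv_eq_zero {κ a b q1 q2 t : ℝ} (hκ : κ ≠ 1) (ha : a ≠ 0)
    (hb : b ≠ 0) (hab : κ * a ^ 2 = b ^ 2) :
    (a * cos t - -q1 / (κ - 1)) * (b * sin t - κ * q2 / (κ - 1)) =
        -q1 / (κ - 1) * (κ * q2 / (κ - 1)) ↔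
      ellipseDistSqDeriv a b q1 q2 t = 0 := by
  have hκ' : κ - 1 ≠ 0 := sub_ne_zero.mpr hκ
  have hexp : (κ - 1) * a * ((a * cos t - -q1 / (κ - 1)) * (b * sin t - κ * q2 / (κ - 1)) -
      -q1 / (κ - 1) * (κ * q2 / (κ - 1))) = b / 2 * ellipseDistSqDeriv a b q1 q2 t := by
    simp only [ellipseDistSqDeriv]
    field_simp
    linear_combination (κ - 1) * (b * cos t * sin t - q2 * cos t) * hab
  rw [← sub_eq_zero, ← mul_right_inj' (mul_ne_zero hκ' ha), hexp, mul_zero, mul_eq_zero,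
    or_iff_right (div_ne_zero hb two_ne_zero)]

theorem stmt7_general (κ p β q1 q2 R : ℝ) (hκ : 1 < κ) (hβ : 0 < β)
    (hq1 : 0 < q1) (hR : 0 < R) :
    let c1 : ℝ := -q1 / (κ - 1)
    let c2 : ℝ := κ * q2 / (κ - 1)
    let z1 : ℝ → ℝ := fun θ => R / Real.sqrt κ * Real.cos θ
    let z2 : ℝ → ℝ := fun θ => R * Real.sin θ
    let HR : ℝ → ℝ := fun θ =>
      R ^ p + β / 2 * ((z1 θ - q1) ^ 2 + (z2 θ - q2) ^ 2)
    (∀ θstar ∈ Set.Ico 0 (2 * Real.pi),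
        (∀ θ ∈ Set.Ico 0 (2 * Real.pi), HR θstar ≤ HR θ) →
        (z1 θstar - c1) * (z2 θstar - c2) = c1 * c2) ∧
    (∀ θ ∈ Set.Ico 0 (2 * Real.pi),
        (z1 θ - c1) * (z2 θ - c2) = c1 * c2 → 0 < z1 θ → 0 < z2 θ →
        ∀ θ' ∈ Set.Ico 0 (2 * Real.pi), HR θ ≤ HR θ') := by
  intro c1 c2 z1 z2 HR
  set a := R / √κ with ha_def
  have hκ0 : 0 < κ := one_pos.trans hκ
  have ha : 0 < a := div_pos hR (sqrt_pos.mpr hκ0)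
  have hab : κ * a ^ 2 = R ^ 2 := by
    rw [ha_def, div_pow, sq_sqrt hκ0.le]
    field_simp
  have hHR : ∀ θ, HR θ = R ^ p + β / 2 * ellipseDistSq a R q1 q2 θ := fun _ => rfl
  have hhyp : ∀ θ, (z1 θ - c1) * (z2 θ - c2) = c1 * c2 ↔ ellipseDistSqDeriv a R q1 q2 θ = 0 :=
    fun _ => hyperbola_iff_ellipseDistSqDeriv_eq_zero hκ.ne' ha.ne' hR.ne' hab
  constructor
  · intro θ _ hmin
    have hmin' : ∀ t ∈ Set.Ico 0 (2 * π), ellipseDistSq a R q1 q2 θ ≤ ellipseDistSq a R q1 q2 t :=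
      fun t ht => by
        simpa only [hHR, add_le_add_iff_left, mul_le_mul_iff_right₀ (half_pos hβ)] using hmin t ht
    have hglobal : ∀ t, ellipseDistSq a R q1 q2 θ ≤ ellipseDistSq a R q1 q2 t := fun t => by
      obtain ⟨t', ht', heq⟩ := (ellipseDistSq_periodic a R q1 q2).exists_mem_Ico₀ two_pi_pos t
      exact heq ▸ hmin' t' ht'
    exact (hhyp θ).mpr
      (ellipseDistSqDeriv_eq_zero_of_isLocalMin (Filter.Eventually.of_forall hglobal))
  · intro θ _ hθ hz1 _ θ' _
    have hab' : a ^ 2 ≤ R ^ 2 := by nlinarith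
    have hle := ellipseDistSq_le_of_ellipseDistSqDeriv_eq_zero ha.le hq1.le hab'
      (pos_of_mul_pos_right hz1 ha.le) ((hhyp θ).mp hθ) θ'
    rw [hHR, hHR]
    gcongr

/-- Every minimiser over `[0, 2π)` of the restriction `H_R` of the proximal objective
to the ellipse `E_R` corresponds to a point of `E_R ∩ H`, where `H` is the hyperbola
`(z₁-c₁)(z₂-c₂) = c₁c₂`; moreover any point of `E_R ∩ H` lying in the open first
quadrant is a global minimiser of `H_R` over `[0, 2π)`. -/
theorem stmt7 (κ p β q1 q2 R : ℝ) (hκ : 1 < κ) (hp : 0 < p) (hβ : 0 < β)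
    (hq1 : 0 < q1) (hq2 : 0 < q2) (hR : 0 < R) :
    let c1 : ℝ := -q1 / (κ - 1)
    let c2 : ℝ := κ * q2 / (κ - 1)
    let z1 : ℝ → ℝ := fun θ => R / Real.sqrt κ * Real.cos θ
    let z2 : ℝ → ℝ := fun θ => R * Real.sin θ
    let HR : ℝ → ℝ := fun θ =>
      R ^ p + β / 2 * ((z1 θ - q1) ^ 2 + (z2 θ - q2) ^ 2)
    (∀ θstar ∈ Set.Ico 0 (2 * Real.pi),
        (∀ θ ∈ Set.Ico 0 (2 * Real.pi), HR θstar ≤ HR θ) →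
        (z1 θstar - c1) * (z2 θstar - c2) = c1 * c2) ∧
    (∀ θ ∈ Set.Ico 0 (2 * Real.pi),
        (z1 θ - c1) * (z2 θ - c2) = c1 * c2 → 0 < z1 θ → 0 < z2 θ →
        ∀ θ' ∈ Set.Ico 0 (2 * Real.pi), HR θ ≤ HR θ') :=
  stmt7_general κ p β q1 q2 R hκ hβ hq1 hR
end

section
/- Let $\kappa > 1$, $p > 0$, $\bar{\beta} > 0$, $\bar{q} = (\bar{q}_1,\bar{q}_2) \in \mathbb{R}^2$ with $\bar{q}_1, \bar{q}_2 > 0$, and set $c_1 = -\frac{\bar{q}_1}{\kappa - 1}$, $c_2 = \frac{\kappa\, \bar{q}_2}{\kappa - 1}$. Define $H(z) = (\kappa z_1^2 + z_2^2)^{p/2} + \frac{\bar{\beta}}{2}\|z - \bar{q}\|_2^2$ for $z \in \mathbb{R}^2$. Then every global minimiser $z^*$ of $H$ over $\mathbb{R}^2$ belongs to the arc of hyperbola $\mathcal{H}_1 = \mathcal{H} \cap ([0, \bar{q}_1] \times [0, \bar{q}_2])$, where $\mathcal{H} = \{z \in \mathbb{R}^2 : (z_1 - c_1)(z_2 - c_2)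 = c_1 c_2\}$. -/
/-!
Write `H(z) = F(κ z₁² + z₂²) + β/2 ‖z - q‖²` with `F s = s ^ (p/2)` increasing on `[0, ∞)`.
Flipping the sign of a coordinate leaves the radial term `F(…)` unchanged, and clipping a
coordinate to `qᵢ` does not increase it; both moves strictly decrease the quadratic term when the
coordinate lies outside `[0, qᵢ]`, which confines minimisers to the box. Away from the origin `F`
is differentiable with `F' > 0`, so eliminating `F'` between the two first-order conditions
`2κ z₁ F' + β (z₁ - q₁) = 0` and `2 z₂ F' + β (z₂ - q₂) = 0` leaves
`κ z₁ (z₂ - q₂) = z₂ (z₁ - q₁)`, which is the equation of the hyperbola `𝓗`.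
-/

open Set

noncomputable def proxObjective (F : ℝ → ℝ) (a b β : ℝ) (q z : ℝ × ℝ) : ℝ :=
  F (a * z.1 ^ 2 + b * z.2 ^ 2) + β / 2 * ((z.1 - q.1) ^ 2 + (z.2 - q.2) ^ 2)

section ProxObjective

variable {F : ℝ → ℝ} {F' a b β : ℝ} {q z : ℝ × ℝ}

theorem proxObjective_swap (F : ℝ → ℝ) (a b β : ℝ) (q z : ℝ × ℝ) :
    proxObjective F a b β q z.swap = proxObjective F b a β q.swap z := by
  simp only [proxObjective, Prod.fst_swap, Prod.snd_swap, add_comm]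

theorem IsMinOn.proxObjective_swap (h : IsMinOn (proxObjective F a b β q) univ z) :
    IsMinOn (proxObjective F b a β q.swap) univ z.swap :=
  isMinOn_univ_iff.mpr fun w => by
    simpa only [← _root_.proxObjective_swap, Prod.swap_swap] using isMinOn_univ_iff.mp h w.swap

theorem IsMinOn.proxObjective_fst_nonneg (hβ : 0 < β) (hq : 0 < q.1)
    (h : IsMinOn (proxObjective F a b β q) univ z) : 0 ≤ z.1 := by
  by_contra! hz
  have hflip := isMinOn_univ_iff.mp h (-z.1, z.2)
  simp only [proxObjective, neg_sq] at hflip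
  nlinarith [mul_pos (mul_pos hβ hq) (neg_pos.mpr hz)]

theorem IsMinOn.proxObjective_snd_nonneg (hβ : 0 < β) (hq : 0 < q.2)
    (h : IsMinOn (proxObjective F a b β q) univ z) : 0 ≤ z.2 :=
  h.proxObjective_swap.proxObjective_fst_nonneg hβ hq

theorem IsMinOn.proxObjective_fst_le (hF : MonotoneOn F (Ici 0)) (ha : 0 ≤ a) (hb : 0 ≤ b)
    (hβ : 0 < β) (hq : 0 ≤ q.1) (h : IsMinOn (proxObjective F a b β q) univ z) :
    z.1 ≤ q.1 := by
  by_contra! hz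
  have hclip := isMinOn_univ_iff.mp h (q.1, z.2)
  have hradial : F (a * q.1 ^ 2 + b * z.2 ^ 2) ≤ F (a * z.1 ^ 2 + b * z.2 ^ 2) :=
    hF (mem_Ici.mpr (by positivity)) (mem_Ici.mpr (by positivity)) (by gcongr)
  simp only [proxObjective] at hclip
  nlinarith [mul_pos hβ (pow_pos (sub_pos.mpr hz) 2)]

theorem IsMinOn.proxObjective_snd_le (hF : MonotoneOn F (Ici 0)) (ha : 0 ≤ a) (hb : 0 ≤ b)
    (hβ : 0 < β) (hq : 0 ≤ q.2) (h : IsMinOn (proxObjective F a b β q) univ z) :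
    z.2 ≤ q.2 :=
  h.proxObjective_swap.proxObjective_fst_le hF hb ha hβ hq

theorem IsMinOn.proxObjective_fst_stationary (hF : HasDerivAt F F' (a * z.1 ^ 2 + b * z.2 ^ 2))
    (h : IsMinOn (proxObjective F a b β q) univ z) :
    F' * (2 * a * z.1) + β * (z.1 - q.1) = 0 := by
  have hslice : HasDerivAt (fun t => proxObjective F a b β q (t, z.2))
      (F' * (2 * a * z.1) + β / 2 * (2 * (z.1 - q.1))) z.1 := by
    have hinner : HasDerivAt (fun t : ℝ => a * t ^ 2 + b * z.2 ^ 2) (2 * a * z.1) z.1 := by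
      simpa [mul_comm, mul_left_comm] using ((hasDerivAt_pow 2 z.1).const_mul a).add_const (b * z.2 ^ 2)
    have hquad : HasDerivAt (fun t : ℝ => (t - q.1) ^ 2 + (z.2 - q.2) ^ 2) (2 * (z.1 - q.1)) z.1 := by
      simpa using (((hasDerivAt_id z.1).sub_const q.1).pow 2).add_const ((z.2 - q.2) ^ 2)
    exact (hF.comp z.1 hinner).add (hquad.const_mul _)
  have hmin : IsLocalMin (fun t => proxObjective F a b β q (t, z.2)) z.1 :=
    IsMinOn.isLocalMin (fun t _ => h (mem_univ (t, z.2))) Filter.univ_mem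
  linear_combination hmin.hasDerivAt_eq_zero hslice

theorem IsMinOn.proxObjective_snd_stationary (hF : HasDerivAt F F' (a * z.1 ^ 2 + b * z.2 ^ 2))
    (h : IsMinOn (proxObjective F a b β q) univ z) :
    F' * (2 * b * z.2) + β * (z.2 - q.2) = 0 :=
  h.proxObjective_swap.proxObjective_fst_stationary (by simpa only [Prod.fst_swap, Prod.snd_swap, add_comm] using hF)

theorem IsMinOn.proxObjective_cross_eq (hF : HasDerivAt F F' (a * z.1 ^ 2 + b * z.2 ^ 2))
    (hF' : F' ≠ 0) (h : IsMinOn (proxObjective F a b β q) univ z) :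
    a * z.1 * (z.2 - q.2) = b * z.2 * (z.1 - q.1) := by
  have h1 := h.proxObjective_fst_stationary hF
  have h2 := h.proxObjective_snd_stationary hF
  have : 2 * F' * (a * z.1 * (z.2 - q.2)) = 2 * F' * (b * z.2 * (z.1 - q.1)) := by
    linear_combination (z.2 - q.2) * h1 - (z.1 - q.1) * h2
  exact mul_left_cancel₀ (by positivity) this

theorem IsMinOn.proxObjective_rpow_cross_eq {p : ℝ} (hp : 0 < p) (ha : 0 < a) (hb : 0 < b)
    (h : IsMinOn (proxObjective (· ^ (p / 2)) a b β q) univ z) :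
    a * z.1 * (z.2 - q.2) = b * z.2 * (z.1 - q.1) := by
  rcases (by positivity : 0 ≤ a * z.1 ^ 2 + b * z.2 ^ 2).eq_or_lt with hs | hs
  · obtain ⟨h1, h2⟩ := (add_eq_zero_iff_of_nonneg (by positivity) (by positivity)).mp hs.symm
    rw [mul_eq_zero, or_iff_right ha.ne', sq_eq_zero_iff] at h1
    rw [mul_eq_zero, or_iff_right hb.ne', sq_eq_zero_iff] at h2
    simp [h1, h2]
  · exact h.proxObjective_cross_eq (Real.hasDerivAt_rpow_const (Or.inl hs.ne'))
      (by positivity)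

end ProxObjective

theorem hyperbola_of_cross_eq {κ q1 q2 z1 z2 : ℝ} (hκ : κ ≠ 1)
    (h : κ * z1 * (z2 - q2) = z2 * (z1 - q1)) :
    (z1 - -q1 / (κ - 1)) * (z2 - κ * q2 / (κ - 1)) = -q1 / (κ - 1) * (κ * q2 / (κ - 1)) := by
  have hκ1 : κ - 1 ≠ 0 := sub_ne_zero.mpr hκ
  field_simp
  linear_combination (κ - 1) * h

/-- Every global minimiser `z*` of
`H(z) = (κz₁² + z₂²)^{p/2} + β̄/2 ‖z - q̄‖₂²` over `ℝ²` belongs to the arc of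
hyperbola `H₁ = H ∩ ([0,q̄₁] × [0,q̄₂])`, where
`H = {z : (z₁-c₁)(z₂-c₂) = c₁c₂}`, `c₁ = -q̄₁/(κ-1)`, `c₂ = κq̄₂/(κ-1)`. -/
theorem stmt8 (κ p β q1 q2 : ℝ) (hκ : 1 < κ) (hp : 0 < p) (hβ : 0 < β)
    (hq1 : 0 < q1) (hq2 : 0 < q2) :
    let c1 : ℝ := -q1 / (κ - 1)
    let c2 : ℝ := κ * q2 / (κ - 1)
    let H : ℝ × ℝ → ℝ := fun z =>
      (κ * z.1 ^ 2 + z.2 ^ 2) ^ (p / 2) + β / 2 * ((z.1 - q1) ^ 2 + (z.2 - q2) ^ 2)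
    ∀ zstar : ℝ × ℝ, (∀ z : ℝ × ℝ, H zstar ≤ H z) →
      (zstar.1 - c1) * (zstar.2 - c2) = c1 * c2 ∧
      zstar.1 ∈ Set.Icc 0 q1 ∧ zstar.2 ∈ Set.Icc 0 q2 := by
  intro c1 c2 H z hmin
  have h : IsMinOn (proxObjective (· ^ (p / 2)) κ 1 β (q1, q2)) univ z :=
    isMinOn_univ_iff.mpr fun w => by simpa only [proxObjective, one_mul] using hmin w
  have hF : MonotoneOn (· ^ (p / 2) : ℝ → ℝ) (Ici 0) :=
    Real.monotoneOn_rpow_Ici_of_exponent_nonneg (by positivity)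
  have hκ0 : 0 < κ := by linarith
  have hcross : κ * z.1 * (z.2 - q2) = z.2 * (z.1 - q1) := by
    simpa only [one_mul] using h.proxObjective_rpow_cross_eq hp hκ0 one_pos
  exact ⟨hyperbola_of_cross_eq hκ.ne' hcross,
    ⟨h.proxObjective_fst_nonneg hβ hq1, h.proxObjective_fst_le hF hκ0.le zero_le_one hβ hq1.le⟩,
    ⟨h.proxObjective_snd_nonneg hβ hq2, h.proxObjective_snd_le hF hκ0.le zero_le_one hβ hq2.le⟩⟩
end

section
/- Let $p, \beta > 0$, $q \in \mathbb{R}^2$, and let $A \in \mathbb{R}^{2\times 2}$ be symmetric positive definite with eigenvalue decomposition $A = V^T \Lambda V$, where $V$ is orthogonal, $\Lambda = \mathrm{diag}(\lambda_1, \lambda_2)$ and $\lambda_1 > \lambda_2 > 0$, so that the condition number is $\kappa = \lambda_1/\lambda_2 > 1$. Set $\tilde{q} = Vq$ and assume both components of $\tilde{q}$ are nonzero; let $s = \mathrm{sign}(\tilde{q})$ componentwise, $\bar{q} = |\tilde{q}|$ componentwise, and $\bar{\beta} = \beta / \lambda_2^{p/2}$. Then every global minimiser $t^* \in \mathbb{R}^2$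 of $F(t) = (t^T A\, t)^{p/2} + \frac{\beta}{2}\|t - q\|_2^2$ can be expressed as $t^* = V^T (s \circ z^*)$, where $z^*$ is a global minimiser of $H(z) = (\kappa z_1^2 + z_2^2)^{p/2} + \frac{\bar{\beta}}{2}\|z - \bar{q}\|_2^2$ over the arc $\mathcal{H}_1 = \mathcal{H} \cap ([0,\bar{q}_1] \times [0,\bar{q}_2])$, with $\mathcal{H} = \{z : (z_1 - c_1)(z_2 - c_2) = c_1 c_2\}$, $c_1 = -\frac{\bar{q}_1}{\kappa-1}$, $c_2 = \frac{\kappa\,\bar{q}_2}{\kappa-1}$. -/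
set_option maxHeartbeats 1000000 in
open Matrix in
/-- Reduction of the bivariate non-convex proximal problem: for a symmetric positive
definite `A = Vᵀ Λ V` with `V` orthogonal, `Λ = diag(λ₁,λ₂)`, `λ₁ > λ₂ > 0`,
`κ = λ₁/λ₂`, and data `q` with `q̃ = Vq` having nonzero components, every global
minimiser `t*` of `F(t) = (tᵀAt)^{p/2} + β/2 ‖t-q‖₂²` can be written as
`t* = Vᵀ(s ∘ z*)` where `z*` is a global minimiser of
`H(z) = (κz₁² + z₂²)^{p/2} + β̄/2 ‖z - q̄‖₂²` over the arc of hyperbola `H₁`. -/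
theorem stmt9 (V : Matrix (Fin 2) (Fin 2) ℝ) (hV1 : Vᵀ * V = 1) (hV2 : V * Vᵀ = 1)
    (lam1 lam2 : ℝ) (hlam : lam1 > lam2) (hlam2 : lam2 > 0)
    (A : Matrix (Fin 2) (Fin 2) ℝ)
    (hA : A = Vᵀ * Matrix.diagonal ![lam1, lam2] * V)
    (p β : ℝ) (hp : 0 < p) (hβ : 0 < β) (q : Fin 2 → ℝ)
    (hq0 : V.mulVec q 0 ≠ 0) (hq1 : V.mulVec q 1 ≠ 0) :
    let κ : ℝ := lam1 / lam2
    let qt : Fin 2 → ℝ := V.mulVec q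
    let s : Fin 2 → ℝ := fun i => Real.sign (qt i)
    let qb : Fin 2 → ℝ := fun i => |qt i|
    let βb : ℝ := β / lam2 ^ (p / 2)
    let c1 : ℝ := -qb 0 / (κ - 1)
    let c2 : ℝ := κ * qb 1 / (κ - 1)
    let F : (Fin 2 → ℝ) → ℝ := fun t =>
      (t ⬝ᵥ A.mulVec t) ^ (p / 2) + β / 2 * ((t 0 - q 0) ^ 2 + (t 1 - q 1) ^ 2)
    let H : (Fin 2 → ℝ) → ℝ := fun z =>
      (κ * z 0 ^ 2 + z 1 ^ 2) ^ (p / 2) + βb / 2 * ((z 0 - qb 0) ^ 2 + (z 1 - qb 1) ^ 2)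
    let arc : Set (Fin 2 → ℝ) :=
      {z | (z 0 - c1) * (z 1 - c2) = c1 * c2 ∧ z 0 ∈ Set.Icc 0 (qb 0) ∧ z 1 ∈ Set.Icc 0 (qb 1)}
    ∀ tstar : Fin 2 → ℝ, (∀ t : Fin 2 → ℝ, F tstar ≤ F t) →
      ∃ zstar : Fin 2 → ℝ,
        zstar ∈ arc ∧ (∀ z ∈ arc, H zstar ≤ H z) ∧
        tstar = Vᵀ.mulVec (fun i => s i * zstar i) := by
  intro κ qt s qb βb c1 c2 F H arc tstar hmin
  -- basic positivity facts
  have hκ1 : (1:ℝ) < κ := (one_lt_div hlam2).mpr hlam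
  have hκ0 : (0:ℝ) < κ := lt_trans one_pos hκ1
  have hlp : (0:ℝ) < lam2 ^ (p/2) := Real.rpow_pos_of_pos hlam2 _
  have hβb : (0:ℝ) < βb := div_pos hβ hlp
  have hqt : ∀ i, qt i ≠ 0 := by intro i; fin_cases i; exacts [hq0, hq1]
  -- sign facts
  have hsign : ∀ x : ℝ, x ≠ 0 → Real.sign x * x = |x| ∧ Real.sign x * Real.sign x = 1 := by
    intro x hx
    rcases hx.lt_or_gt with h | h
    · simp [Real.sign_of_neg h, abs_of_neg h]
    · simp [Real.sign_of_pos h, abs_of_pos h]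
  have hmul : ∀ i, s i * qt i = qb i := fun i => (hsign _ (hqt i)).1
  have hsq : ∀ i, s i * s i = 1 := fun i => (hsign _ (hqt i)).2
  have hqb0 : 0 < qb 0 := abs_pos.mpr (hqt 0)
  have hqb1 : 0 < qb 1 := abs_pos.mpr (hqt 1)
  have hqts : ∀ i, qt i = s i * qb i := fun i => by
    linear_combination s i * hmul i - qt i * hsq i
  -- the key factorization of F
  have hFG : ∀ t : Fin 2 → ℝ, F t = lam2 ^ (p/2) *
      ((κ * (V.mulVec t 0)^2 + (V.mulVec t 1)^2) ^ (p/2)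
        + βb/2 * ((V.mulVec t 0 - qt 0)^2 + (V.mulVec t 1 - qt 1)^2)) := by
    intro t
    have h0 : t ⬝ᵥ A.mulVec t = lam1 * (V.mulVec t 0)^2 + lam2 * (V.mulVec t 1)^2 := by
      rw [hA]
      simp [Matrix.mulVec, dotProduct, Fin.sum_univ_two, Matrix.mul_apply,
        Matrix.diagonal, Matrix.transpose_apply]
      ring
    have hl1 : lam1 = κ * lam2 := by
      show lam1 = lam1 / lam2 * lam2
      field_simp
    have hquad : t ⬝ᵥ A.mulVec t = lam2 * (κ * (V.mulVec t 0)^2 + (V.mulVec t 1)^2) := by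
      rw [h0, hl1]; ring
    have hdist : (t 0 - q 0)^2 + (t 1 - q 1)^2
        = (V.mulVec t 0 - qt 0)^2 + (V.mulVec t 1 - qt 1)^2 := by
      have h00 := congrFun (congrFun hV1 0) 0
      have h01 := congrFun (congrFun hV1 0) 1
      have h11 := congrFun (congrFun hV1 1) 1
      simp [Matrix.mul_apply, Fin.sum_univ_two, Matrix.transpose_apply,
        Matrix.one_apply] at h00 h01 h11
      show (t 0 - q 0)^2 + (t 1 - q 1)^2
        = (V.mulVec t 0 - V.mulVec q 0)^2 + (V.mulVec t 1 - V.mulVec q 1)^2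
      simp only [Matrix.mulVec, dotProduct, Fin.sum_univ_two]
      linear_combination (-(t 0 - q 0)^2) * h00 + (-2*(t 0 - q 0)*(t 1 - q 1)) * h01
        + (-(t 1 - q 1)^2) * h11
    have hX : 0 ≤ κ * (V.mulVec t 0)^2 + (V.mulVec t 1)^2 :=
      add_nonneg (mul_nonneg hκ0.le (sq_nonneg _)) (sq_nonneg _)
    have hβ' : lam2 ^ (p/2) * βb = β := by
      show lam2 ^ (p/2) * (β / lam2 ^ (p/2)) = β
      field_simp
    show (t ⬝ᵥ A.mulVec t) ^ (p/2) + β/2 * ((t 0 - q 0)^2 + (t 1 - q 1)^2) = _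
    rw [hquad, Real.mul_rpow hlam2.le hX, hdist, ← hβ']
    ring
  -- F at reflected points equals lam2^(p/2) * H
  have hFH : ∀ z : Fin 2 → ℝ,
      F (Vᵀ.mulVec (fun i => s i * z i)) = lam2 ^ (p/2) * H z := by
    intro z
    have hv : ∀ i, V.mulVec (Vᵀ.mulVec (fun j => s j * z j)) i = s i * z i := fun i => by
      rw [Matrix.mulVec_mulVec, hV2, Matrix.one_mulVec]
    rw [hFG, hv 0, hv 1]
    have e1 : κ * (s 0 * z 0)^2 + (s 1 * z 1)^2 = κ * z 0 ^ 2 + z 1 ^ 2 := by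
      linear_combination (κ * z 0 ^ 2) * hsq 0 + (z 1 ^ 2) * hsq 1
    have e2 : (s 0 * z 0 - qt 0)^2 = (z 0 - qb 0)^2 := by
      rw [hqts 0]; linear_combination ((z 0 - qb 0)^2) * hsq 0
    have e3 : (s 1 * z 1 - qt 1)^2 = (z 1 - qb 1)^2 := by
      rw [hqts 1]; linear_combination ((z 1 - qb 1)^2) * hsq 1
    rw [e1, e2, e3]
  -- the candidate
  set u : Fin 2 → ℝ := V.mulVec tstar with hu
  have hsz : (fun i => s i * (s i * u i)) = u := by
    funext i
    linear_combination u i * hsq i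
  have hrep : tstar = Vᵀ.mulVec (fun i => s i * (s i * u i)) := by
    rw [hsz, hu, Matrix.mulVec_mulVec, hV1, Matrix.one_mulVec]
  have hFstar : F tstar = lam2 ^ (p/2) * H (fun i => s i * u i) := by
    calc F tstar = F (Vᵀ.mulVec (fun i => s i * ((fun j => s j * u j) i))) := by rw [← hrep]
    _ = lam2 ^ (p/2) * H (fun i => s i * u i) := hFH _
  have hminH : ∀ z ∈ arc, H (fun i => s i * u i) ≤ H z := by
    intro z _
    have h := hmin (Vᵀ.mulVec (fun i => s i * z i))
    rw [hFH z, hFstar] at h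
    exact le_of_mul_le_mul_left h hlp
  refine ⟨fun i => s i * u i, ?_, hminH, hrep⟩
  -- arc membership
  by_cases hu0 : u = 0
  · have h0 : ∀ i, s i * u i = 0 := by intro i; rw [hu0]; simp
    refine ⟨?_, ⟨?_, ?_⟩, ?_, ?_⟩
    · show (s 0 * u 0 - c1) * (s 1 * u 1 - c2) = c1 * c2
      rw [h0 0, h0 1]; ring
    · show (0:ℝ) ≤ s 0 * u 0
      rw [h0 0]
    · show s 0 * u 0 ≤ qb 0
      rw [h0 0]; exact hqb0.le
    · show (0:ℝ) ≤ s 1 * u 1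
      rw [h0 1]
    · show s 1 * u 1 ≤ qb 1
      rw [h0 1]; exact hqb1.le
  · -- stationarity analysis
    have hbase : 0 < κ * (u 0)^2 + (u 1)^2 := by
      have : u 0 ≠ 0 ∨ u 1 ≠ 0 := by
        by_contra hc
        push_neg at hc
        exact hu0 (funext fun i => by fin_cases i <;> simp [hc.1, hc.2])
      rcases this with h | h
      · have := pow_pos (abs_pos.mpr h) 2
        rw [sq_abs] at this
        nlinarith [sq_nonneg (u 1)]
      · have := pow_pos (abs_pos.mpr h) 2
        rw [sq_abs] at this
        nlinarith [mul_nonneg hκ0.le (sq_nonneg (u 0))]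
    -- global minimality in coordinates
    have hGmin : ∀ x y : ℝ,
        (κ * (u 0)^2 + (u 1)^2) ^ (p/2) + βb/2 * ((u 0 - qt 0)^2 + (u 1 - qt 1)^2)
        ≤ (κ * x^2 + y^2) ^ (p/2) + βb/2 * ((x - qt 0)^2 + (y - qt 1)^2) := by
      intro x y
      have h := hmin (Vᵀ.mulVec ![x, y])
      have hv : ∀ i, V.mulVec (Vᵀ.mulVec ![x, y]) i = ![x, y] i := fun i => by
        rw [Matrix.mulVec_mulVec, hV2, Matrix.one_mulVec]
      rw [hFG tstar, hFG (Vᵀ.mulVec ![x, y]), hv 0, hv 1] at h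
      simp only [Matrix.cons_val_zero, Matrix.cons_val_one, Matrix.head_cons] at h
      exact le_of_mul_le_mul_left h hlp
    -- derivative in coordinate 0
    have hloc0 : IsLocalMin
        (fun x : ℝ => (κ * x^2 + (u 1)^2) ^ (p/2) + βb/2 * ((x - qt 0)^2 + (u 1 - qt 1)^2)) (u 0) :=
      Filter.Eventually.of_forall fun x => hGmin x (u 1)
    have hd0 : HasDerivAt
        (fun x : ℝ => (κ * x^2 + (u 1)^2) ^ (p/2) + βb/2 * ((x - qt 0)^2 + (u 1 - qt 1)^2))
        ((κ*(2*u 0)) * (p/2) * (κ*(u 0)^2+(u 1)^2) ^ (p/2 - 1) + βb/2 * (2*(u 0 - qt 0))) (u 0) := by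
      have h1 : HasDerivAt (fun x : ℝ => κ * x^2 + (u 1)^2) (κ*(2*u 0)) (u 0) := by
        simpa using (((hasDerivAt_pow 2 (u 0)).const_mul κ).add_const ((u 1)^2))
      have h2 := h1.rpow_const (p := p/2) (Or.inl hbase.ne')
      have h3 : HasDerivAt (fun x : ℝ => βb/2 * ((x - qt 0)^2 + (u 1 - qt 1)^2))
          (βb/2 * (2*(u 0 - qt 0))) (u 0) := by
        have h4 : HasDerivAt (fun x : ℝ => (x - qt 0)^2 + (u 1 - qt 1)^2) (2*(u 0 - qt 0)) (u 0) := by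
          have : HasDerivAt (fun x : ℝ => (x - qt 0)^2) (2*(u 0 - qt 0)) (u 0) := by
            simpa using ((hasDerivAt_id (u 0)).sub_const (qt 0)).fun_pow 2
          simpa using this.add_const ((u 1 - qt 1)^2)
        simpa [mul_comm] using h4.const_mul (βb/2)
      exact h2.add h3
    have heq0 := hloc0.hasDerivAt_eq_zero hd0
    -- derivative in coordinate 1
    have hloc1 : IsLocalMin
        (fun y : ℝ => (κ * (u 0)^2 + y^2) ^ (p/2) + βb/2 * ((u 0 - qt 0)^2 + (y - qt 1)^2)) (u 1) :=
      Filter.Eventually.of_forall fun y => hGmin (u 0) y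
    have hd1 : HasDerivAt
        (fun y : ℝ => (κ * (u 0)^2 + y^2) ^ (p/2) + βb/2 * ((u 0 - qt 0)^2 + (y - qt 1)^2))
        ((2*u 1) * (p/2) * (κ*(u 0)^2+(u 1)^2) ^ (p/2 - 1) + βb/2 * (2*(u 1 - qt 1))) (u 1) := by
      have h1 : HasDerivAt (fun y : ℝ => κ * (u 0)^2 + y^2) (2*u 1) (u 1) := by
        simpa using ((hasDerivAt_pow 2 (u 1)).const_add (κ * (u 0)^2))
      have h2 := h1.rpow_const (p := p/2) (Or.inl hbase.ne')
      have h3 : HasDerivAt (fun y : ℝ => βb/2 * ((u 0 - qt 0)^2 + (y - qt 1)^2))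
          (βb/2 * (2*(u 1 - qt 1))) (u 1) := by
        have h4 : HasDerivAt (fun y : ℝ => (u 0 - qt 0)^2 + (y - qt 1)^2) (2*(u 1 - qt 1)) (u 1) := by
          have : HasDerivAt (fun y : ℝ => (y - qt 1)^2) (2*(u 1 - qt 1)) (u 1) := by
            simpa using ((hasDerivAt_id (u 1)).sub_const (qt 1)).fun_pow 2
          simpa using this.const_add ((u 0 - qt 0)^2)
        simpa [mul_comm] using h4.const_mul (βb/2)
      exact h2.add h3
    have heq1 := hloc1.hasDerivAt_eq_zero hd1
    -- set r
    set r : ℝ := p * (κ*(u 0)^2+(u 1)^2) ^ (p/2 - 1) with hrdef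
    have hr : 0 < r := mul_pos hp (Real.rpow_pos_of_pos hbase _)
    have hu0eq : u 0 * (βb + r*κ) = βb * qt 0 := by
      linear_combination heq0
    have hu1eq : u 1 * (βb + r) = βb * qt 1 := by
      linear_combination heq1
    have hden0 : 0 < βb + r*κ := add_pos hβb (mul_pos hr hκ0)
    have hden1 : 0 < βb + r := add_pos hβb hr
    have hz0 : s 0 * u 0 * (βb + r*κ) = βb * qb 0 := by
      linear_combination s 0 * hu0eq + βb * hmul 0
    have hz1 : s 1 * u 1 * (βb + r) = βb * qb 1 := by
      linear_combination s 1 * hu1eq + βb * hmul 1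
    have hz0' : s 0 * u 0 = βb * qb 0 / (βb + r*κ) := (eq_div_iff hden0.ne').mpr hz0
    have hz1' : s 1 * u 1 = βb * qb 1 / (βb + r) := (eq_div_iff hden1.ne').mpr hz1
    have hκm : κ - 1 ≠ 0 := sub_ne_zero.mpr (ne_of_gt hκ1)
    refine ⟨?_, ⟨?_, ?_⟩, ?_, ?_⟩
    · show (s 0 * u 0 - c1) * (s 1 * u 1 - c2) = c1 * c2
      show (s 0 * u 0 - (-qb 0 / (κ - 1))) * (s 1 * u 1 - κ * qb 1 / (κ - 1))
        = (-qb 0 / (κ - 1)) * (κ * qb 1 / (κ - 1))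
      rw [hz0', hz1']
      field_simp
      ring
    · show (0:ℝ) ≤ s 0 * u 0
      rw [hz0']
      exact div_nonneg (mul_nonneg hβb.le hqb0.le) hden0.le
    · show s 0 * u 0 ≤ qb 0
      have h5 : βb * qb 0 ≤ (βb + r*κ) * qb 0 :=
        mul_le_mul_of_nonneg_right (le_add_of_nonneg_right (mul_pos hr hκ0).le) hqb0.le
      rw [hz0', div_le_iff₀ hden0]
      linarith
    · show (0:ℝ) ≤ s 1 * u 1
      rw [hz1']
      exact div_nonneg (mul_nonneg hβb.le hqb1.le) hden1.le
    · show s 1 * u 1 ≤ qb 1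
      have h5 : βb * qb 1 ≤ (βb + r) * qb 1 :=
        mul_le_mul_of_nonneg_right (le_add_of_nonneg_right hr.le) hqb1.le
      rw [hz1', div_le_iff₀ hden1]
      linarith
end

section
/- Let $\kappa > 1$, $p > 0$, $\bar{\beta} > 0$, $\bar{q} = (\bar{q}_1,\bar{q}_2) \in \mathbb{R}^2$ with $\bar{q}_1, \bar{q}_2 > 0$, $c_1 = -\frac{\bar{q}_1}{\kappa - 1}$, $c_2 = \frac{\kappa\, \bar{q}_2}{\kappa - 1}$, and define $h_1(\xi) = \xi^2 \big(\kappa + \frac{c_2^2}{(\xi - c_1)^2}\big)$, $h_2(\xi) = \xi(\kappa - 1)\big(\xi - 2c_1 + \frac{2 c_2^2}{\kappa(\xi - c_1)}\big)$ and $h(\xi) = (h_1(\xi))^{p/2} + \frac{\bar{\beta}}{2} h_1(\xi) - \frac{\bar{\beta}}{2} h_2(\xi)$ for $\xi \in [0, \bar{q}_1]$, and let $H(z) = (\kappa z_1^2 + z_2^2)^{p/2} + \frac{\bar{\beta}}{2}\|z - \bar{q}\|_2^2$. Then for every $\xi \in [0,\bar{q}_1]$ the point $z(\xi) = \big(\xi,\;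 c_2\,\frac{\xi}{\xi - c_1}\big)$ lies on the hyperbola $\{(z_1,z_2) : (z_1 - c_1)(z_2 - c_2) = c_1 c_2\}$ and $H(z(\xi)) - h(\xi)$ is a constant independent of $\xi$; consequently, $z^* = \big(z_1^*, c_2 \frac{z_1^*}{z_1^* - c_1}\big)$ is a minimiser of $H$ over the arc $\mathcal{H}_1 = \{z(\xi) : \xi \in [0,\bar{q}_1],\ z_2(\xi) \in [0,\bar q_2]\}$ if and only if $z_1^*$ is a minimiser of $h$ over $[0, \bar{q}_1]$. -/
/-- Reduction of the bivariate problem on the hyperbola arc to a one-dimensional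
problem: for `ξ ∈ [0, q̄₁]` the point `z(ξ) = (ξ, c₂ ξ/(ξ-c₁))` lies on the hyperbola
`(z₁-c₁)(z₂-c₂) = c₁c₂`, the difference `H(z(ξ)) - h(ξ)` is a constant independent
of `ξ`, and `z* = z(z₁*)` minimises `H` over the arc `H₁` iff `z₁*` minimises `h`
over `[0, q̄₁]`. -/
theorem stmt10 (κ p β q1 q2 : ℝ) (hκ : 1 < κ) (hp : 0 < p) (hβ : 0 < β)
    (hq1 : 0 < q1) (hq2 : 0 < q2) :
    let c1 : ℝ := -q1 / (κ - 1)
    let c2 : ℝ := κ * q2 / (κ - 1)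
    let h1 : ℝ → ℝ := fun ξ => ξ ^ 2 * (κ + c2 ^ 2 / (ξ - c1) ^ 2)
    let h2 : ℝ → ℝ := fun ξ => ξ * (κ - 1) * (ξ - 2 * c1 + 2 * c2 ^ 2 / (κ * (ξ - c1)))
    let h : ℝ → ℝ := fun ξ => h1 ξ ^ (p / 2) + β / 2 * h1 ξ - β / 2 * h2 ξ
    let z : ℝ → ℝ × ℝ := fun ξ => (ξ, c2 * (ξ / (ξ - c1)))
    let H : ℝ × ℝ → ℝ := fun w =>
      (κ * w.1 ^ 2 + w.2 ^ 2) ^ (p / 2) + β / 2 * ((w.1 - q1) ^ 2 + (w.2 - q2) ^ 2)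
    let arc : Set (ℝ × ℝ) :=
      {w | ∃ ξ ∈ Set.Icc 0 q1, w = z ξ ∧ (z ξ).2 ∈ Set.Icc 0 q2}
    (∀ ξ ∈ Set.Icc 0 q1, ((z ξ).1 - c1) * ((z ξ).2 - c2) = c1 * c2) ∧
    (∃ Cst : ℝ, ∀ ξ ∈ Set.Icc 0 q1, H (z ξ) = h ξ + Cst) ∧
    (∀ z1star ∈ Set.Icc 0 q1,
      ((z z1star ∈ arc ∧ ∀ w ∈ arc, H (z z1star) ≤ H w) ↔
        (∀ ξ ∈ Set.Icc 0 q1, h z1star ≤ h ξ))) := by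
  intro c1 c2 h1 h2 h z H arc
  have hκ1 : (0:ℝ) < κ - 1 := by linarith
  have hκ0 : κ ≠ 0 := by positivity
  have hκ1' : κ - 1 ≠ 0 := ne_of_gt hκ1
  have hc1 : c1 < 0 := by
    show -q1 / (κ - 1) < 0
    exact div_neg_of_neg_of_pos (by linarith) hκ1
  have hden : ∀ ξ ∈ Set.Icc (0:ℝ) q1, ξ - c1 > 0 := fun ξ hξ => by
    have := hξ.1; linarith
  -- the second coordinate lies in [0, q2]
  have hz2 : ∀ ξ ∈ Set.Icc (0:ℝ) q1, (z ξ).2 ∈ Set.Icc 0 q2 := by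
    intro ξ hξ
    have hd := hden ξ hξ
    constructor
    · have hc2 : 0 ≤ c2 := by
        have : (0:ℝ) ≤ κ * q2 := by positivity
        exact div_nonneg this (le_of_lt hκ1)
      exact mul_nonneg hc2 (div_nonneg hξ.1 hd.le)
    · show c2 * (ξ / (ξ - c1)) ≤ q2
      rw [mul_div_assoc', div_le_iff₀ hd]
      have e1 : c2 * (κ - 1) = κ * q2 := by
        show κ * q2 / (κ - 1) * (κ - 1) = κ * q2; field_simp
      have e2 : c1 * (κ - 1) = -q1 := by
        show -q1 / (κ - 1) * (κ - 1) = -q1; field_simp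
      nlinarith [e1, e2, mul_nonneg hq2.le (sub_nonneg.2 hξ.2), hκ1]
  -- H(z ξ) = h ξ + Cst
  have key : ∀ ξ ∈ Set.Icc (0:ℝ) q1, H (z ξ) = h ξ + β / 2 * (q1 ^ 2 + q2 ^ 2) := by
    intro ξ hξ
    have hd := hden ξ hξ
    have hd' : ξ - c1 ≠ 0 := ne_of_gt hd
    have e1 : κ * (z ξ).1 ^ 2 + (z ξ).2 ^ 2 = h1 ξ := by
      show κ * ξ ^ 2 + (c2 * (ξ / (ξ - c1))) ^ 2 = ξ ^ 2 * (κ + c2 ^ 2 / (ξ - c1) ^ 2)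
      field_simp
    show (κ * (z ξ).1 ^ 2 + (z ξ).2 ^ 2) ^ (p / 2) + β / 2 * (((z ξ).1 - q1) ^ 2 + ((z ξ).2 - q2) ^ 2)
        = h1 ξ ^ (p / 2) + β / 2 * h1 ξ - β / 2 * h2 ξ + β / 2 * (q1 ^ 2 + q2 ^ 2)
    rw [e1]
    have e2 : ((z ξ).1 - q1) ^ 2 + ((z ξ).2 - q2) ^ 2 = h1 ξ - h2 ξ + (q1 ^ 2 + q2 ^ 2) := by
      show (ξ - q1) ^ 2 + (c2 * (ξ / (ξ - c1)) - q2) ^ 2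
          = ξ ^ 2 * (κ + c2 ^ 2 / (ξ - c1) ^ 2)
            - ξ * (κ - 1) * (ξ - 2 * c1 + 2 * c2 ^ 2 / (κ * (ξ - c1))) + (q1 ^ 2 + q2 ^ 2)
      have hq1e : q1 = -c1 * (κ - 1) := by
        show q1 = -(-q1 / (κ - 1)) * (κ - 1); field_simp
      have hq2e : q2 = c2 * (κ - 1) / κ := by
        show q2 = κ * q2 / (κ - 1) * (κ - 1) / κ; field_simp
      rw [hq1e, hq2e]
      field_simp
      ring
    rw [e2]; ring
  refine ⟨?_, ⟨β / 2 * (q1 ^ 2 + q2 ^ 2), key⟩, ?_⟩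
  · intro ξ hξ
    have hd' : ξ - c1 ≠ 0 := ne_of_gt (hden ξ hξ)
    show (ξ - c1) * (c2 * (ξ / (ξ - c1)) - c2) = c1 * c2
    field_simp
    ring
  · intro z1star hzs
    constructor
    · rintro ⟨_, hmin⟩ ξ hξ
      have := hmin (z ξ) ⟨ξ, hξ, rfl, hz2 ξ hξ⟩
      rw [key z1star hzs, key ξ hξ] at this
      exact le_of_add_le_add_right this
    · intro hmin
      refine ⟨⟨z1star, hzs, rfl, hz2 z1star hzs⟩, ?_⟩
      rintro w ⟨ξ, hξ, rfl, -⟩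
      rw [key z1star hzs, key ξ hξ]
      exact add_le_add (hmin ξ hξ) le_rfl
end
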